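/- arXiv:1601.04173 — 6 statements merged into one kernel-verified Lean document; each statement's English description precedes it below -/
import Mathlib

section
/- Let A, B, C, D be mutually commuting bounded linear operators on a Banach space X with C∘A + D∘B = I. Then for every positive integer n, the kernel of Aⁿ is contained in the range of Bⁿ. Consequently, the generalized kernel N^∞(A) = ⋃ₙ N(Aⁿ) is contained in the hyper-range R^∞(B) = ⋂ₙ R(Bⁿ). -/
/-!
Since everything commutes, `A` and `B` generate together with `C` and `D` a commutative ring in
which `A` and `B` are coprime, so `Aⁿ` and `Bᵐ` are coprime as well: `U Aⁿ + Bᵐ V = 1` for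
some operators `U`, `V`. Applied to `x ∈ N(Aⁿ)` this gives `x = Bᵐ (V x)`, for all `n` and `m`.
-/

open scoped IsMulCommutative in
theorem exists_mul_pow_add_pow_mul_eq_one {R : Type*} [Ring R] {a b c d : R}
    (hab : Commute a b) (hac : Commute a c) (had : Commute a d)
    (hbc : Commute b c) (hbd : Commute b d) (hcd : Commute c d)
    (h : c * a + d * b = 1) (m n : ℕ) :
    ∃ u v : R, u * a ^ m + b ^ n * v = 1 := by
  have hcomm : ∀ x ∈ ({a, b, c, d} : Set R), ∀ y ∈ ({a, b, c, d} : Set R), x * y = y * x := by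
    simp only [Set.mem_insert_iff, Set.mem_singleton_iff]
    rintro x (rfl | rfl | rfl | rfl) y (rfl | rfl | rfl | rfl) <;>
      first | rfl | exact Commute.eq ‹_› | exact (Commute.eq ‹_›).symm
  have := Subring.isMulCommutative_closure hcomm
  have mem : ∀ x ∈ ({a, b, c, d} : Set R), x ∈ Subring.closure ({a, b, c, d} : Set R) :=
    fun _ hx => Subring.subset_closure hx
  have hcop : IsCoprime (⟨a, mem a (by simp)⟩ : Subring.closure ({a, b, c, d} : Set R))
      ⟨b, mem b (by simp)⟩ :=
    ⟨⟨c, mem c (by simp)⟩, ⟨d, mem d (by simp)⟩, Subtype.ext h⟩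
  obtain ⟨u, v, huv⟩ := hcop.pow (m := m) (n := n)
  rw [mul_comm v] at huv
  exact ⟨u, v, congrArg Subtype.val huv⟩

namespace ContinuousLinearMap

variable {R M : Type*} [Ring R] [TopologicalSpace M] [AddCommGroup M] [Module R M]
  [IsTopologicalAddGroup M]

theorem ker_le_range_of_mul_add_mul_eq_one {f g u v : M →L[R] M} (h : u * f + g * v = 1) :
    LinearMap.ker (f : M →ₗ[R] M) ≤ LinearMap.range (g : M →ₗ[R] M) := by
  intro x hx
  refine ⟨v x, ?_⟩
  have hx' : f x = 0 := hx
  simpa [hx'] using congrArg (fun T : M →L[R] M => T x) h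

theorem ker_pow_le_range_pow {A B C D : M →L[R] M}
    (hAB : Commute A B) (hAC : Commute A C) (hAD : Commute A D)
    (hBC : Commute B C) (hBD : Commute B D) (hCD : Commute C D)
    (h : C * A + D * B = 1) (n m : ℕ) :
    LinearMap.ker ((A ^ n : M →L[R] M) : M →ₗ[R] M) ≤
      LinearMap.range ((B ^ m : M →L[R] M) : M →ₗ[R] M) :=
  have ⟨_, _, huv⟩ := exists_mul_pow_add_pow_mul_eq_one hAB hAC hAD hBC hBD hCD h n m
  ker_le_range_of_mul_add_mul_eq_one huv

end ContinuousLinearMap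

theorem stmt3_general {X : Type*} [NormedAddCommGroup X] [NormedSpace ℂ X]
    (A B C D : X →L[ℂ] X)
    (hAB : Commute A B) (hAC : Commute A C) (hAD : Commute A D)
    (hBC : Commute B C) (hBD : Commute B D) (hCD : Commute C D)
    (h : C * A + D * B = 1) :
    (∀ n : ℕ, 0 < n → (LinearMap.ker ((A ^ n : X →L[ℂ] X) : X →ₗ[ℂ] X) : Set X) ⊆ LinearMap.range ((B ^ n : X →L[ℂ] X) : X →ₗ[ℂ] X)) ∧
    (⋃ n : ℕ, (LinearMap.ker ((A ^ n : X →L[ℂ] X) : X →ₗ[ℂ] X) : Set X)) ⊆ ⋂ n : ℕ, (LinearMap.range ((B ^ n : X →L[ℂ] X) : X →ₗ[ℂ] X) : Set X) := by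
  have hker := ContinuousLinearMap.ker_pow_le_range_pow hAB hAC hAD hBC hBD hCD h
  refine ⟨fun n _ => hker n n, ?_⟩
  simp only [Set.iUnion_subset_iff, Set.subset_iInter_iff, SetLike.coe_subset_coe]
  exact fun m n => hker n m

/-- Lemma 3.2(3): if `A, B, C, D` are mutually commuting bounded operators with
`C ∘ A + D ∘ B = I`, then for every positive integer `n`, `N(Aⁿ) ⊆ R(Bⁿ)`;
consequently the generalized kernel `N^∞(A) = ⋃ₙ N(Aⁿ)` is contained in the
hyper-range `R^∞(B) = ⋂ₙ R(Bⁿ)`. -/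
theorem stmt3 {X : Type*} [NormedAddCommGroup X] [NormedSpace ℂ X] [CompleteSpace X]
    (A B C D : X →L[ℂ] X)
    (hAB : Commute A B) (hAC : Commute A C) (hAD : Commute A D)
    (hBC : Commute B C) (hBD : Commute B D) (hCD : Commute C D)
    (h : C * A + D * B = 1) :
    (∀ n : ℕ, 0 < n → (LinearMap.ker ((A ^ n : X →L[ℂ] X) : X →ₗ[ℂ] X) : Set X) ⊆ LinearMap.range ((B ^ n : X →L[ℂ] X) : X →ₗ[ℂ] X)) ∧
    (⋃ n : ℕ, (LinearMap.ker ((A ^ n : X →L[ℂ] X) : X →ₗ[ℂ] X) : Set X)) ⊆ ⋂ n : ℕ, (LinearMap.range ((B ^ n : X →L[ℂ] X) : X →ₗ[ℂ] X) : Set X) :=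
  stmt3_general A B C D hAB hAC hAD hBC hBD hCD h
end

section
/- Let S and T be commuting bounded linear operators on a Banach space X. Then the analytic core of the product is contained in the intersection of the analytic cores: K(S∘T) ⊆ K(S) ∩ K(T). -/
/-- The analytic core `K(T)` of a bounded operator `T`: the set of `x` for which there
exist a backward orbit `(xₙ)` with `x₀ = x`, `T xₙ = x_{n-1}` for `n ≥ 1`, and
`‖xₙ‖ ≤ δⁿ ‖x‖` for some `δ > 0`. -/
def analyticCore {X : Type*} [NormedAddCommGroup X] [NormedSpace ℂ X]
    (T : X →L[ℂ] X) : Set X :=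
  {x | ∃ u : ℕ → X, ∃ δ : ℝ, 0 < δ ∧ u 0 = x ∧
    (∀ n : ℕ, 1 ≤ n → T (u n) = u (n - 1)) ∧ ∀ n : ℕ, ‖u n‖ ≤ δ ^ n * ‖x‖}

/-! If `(uₙ)` is a backward orbit of `x` under `AB`, then `vₙ = Bⁿ uₙ` is one under `A`,
since `A Bⁿ⁺¹ uₙ₊₁ = Bⁿ (AB) uₙ₊₁ = Bⁿ uₙ`, and `‖vₙ‖ ≤ ((‖B‖ + 1) δ)ⁿ ‖x‖`.
As `ST = TS`, the same argument with the roles swapped gives `K(ST) ⊆ K(T)`. -/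

theorem ContinuousLinearMap.norm_pow_apply_le {𝕜 X : Type*} [NontriviallyNormedField 𝕜]
    [SeminormedAddCommGroup X] [NormedSpace 𝕜 X] (B : X →L[𝕜] X) (n : ℕ) (v : X) :
    ‖(B ^ n) v‖ ≤ ‖B‖ ^ n * ‖v‖ := by
  induction n with
  | zero => simp
  | succ n ih =>
    calc ‖(B ^ (n + 1)) v‖ = ‖B ((B ^ n) v)‖ := by rw [pow_succ']; rfl
      _ ≤ ‖B‖ * (‖B‖ ^ n * ‖v‖) := B.le_opNorm_of_le ih
      _ = ‖B‖ ^ (n + 1) * ‖v‖ := by ring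

theorem Commute.mul_pow_succ_eq_pow_mul {M : Type*} [Monoid M] {a b : M} (h : Commute a b)
    (n : ℕ) : a * b ^ (n + 1) = b ^ n * (a * b) := by
  rw [pow_succ, ← mul_assoc, (h.pow_right n).eq, mul_assoc]

theorem analyticCore_mul_subset_left {X : Type*} [NormedAddCommGroup X] [NormedSpace ℂ X]
    {A B : X →L[ℂ] X} (hAB : Commute A B) :
    analyticCore (A * B) ⊆ analyticCore A := by
  rintro x ⟨u, δ, hδ, hu0, hrec, hbound⟩
  refine ⟨fun n => (B ^ n) (u n), (‖B‖ + 1) * δ, by positivity, by simp [hu0], ?_, ?_⟩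
  · rintro (_ | m) hm
    · omega
    calc A ((B ^ (m + 1)) (u (m + 1))) = (B ^ m) ((A * B) (u (m + 1))) :=
          congr($(hAB.mul_pow_succ_eq_pow_mul m) (u (m + 1)))
      _ = (B ^ m) (u m) := by rw [hrec (m + 1) m.succ_pos, Nat.add_sub_cancel]
  · intro n
    calc ‖(B ^ n) (u n)‖ ≤ ‖B‖ ^ n * (δ ^ n * ‖x‖) := 
          (B.norm_pow_apply_le n _).trans (by gcongr; exact hbound n)
      _ ≤ (‖B‖ + 1) ^ n * (δ ^ n * ‖x‖) := by gcongr; linarith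
      _ = ((‖B‖ + 1) * δ) ^ n * ‖x‖ := by rw [mul_pow]; ring

theorem stmt5_general {X : Type*} [NormedAddCommGroup X] [NormedSpace ℂ X]
    (S T : X →L[ℂ] X) (hST : Commute S T) :
    analyticCore (S * T) ⊆ analyticCore S ∩ analyticCore T := fun _ hx =>
  ⟨analyticCore_mul_subset_left hST hx, analyticCore_mul_subset_left hST.symm (hST.eq ▸ hx)⟩

/-- If `S` and `T` are commuting bounded operators on a Banach space, then
`K(S ∘ T) ⊆ K(S) ∩ K(T)`. -/
theorem stmt5 {X : Type*} [NormedAddCommGroup X] [NormedSpace ℂ X] [CompleteSpace X]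
    (S T : X →L[ℂ] X) (hST : Commute S T) :
    analyticCore (S * T) ⊆ analyticCore S ∩ analyticCore T :=
  stmt5_general S T hST
end

section
/- Let (T(t))_{t≥0} be a strongly continuous semigroup on a Banach space X with generator A. For every λ ∈ ℂ and t > 0, the quasi-nilpotent part satisfies H₀(λ·I − A) ⊆ H₀(e^{λt}·I − T(t)). -/
open Filter Topology MeasureTheory intervalIntegral

/-- A strongly continuous semigroup of bounded operators on a Banach space `X`. -/
structure C0Semigroup (X : Type*) [NormedAddCommGroup X] [NormedSpace ℂ X] where
  /-- the family of bounded operators -/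
  T : ℝ → X →L[ℂ] X
  map_zero' : T 0 = 1
  map_add' : ∀ s t : ℝ, 0 ≤ s → 0 ≤ t → T (s + t) = T s ∘L T t
  strong_cont' : ∀ x : X, ContinuousOn (fun t => T t x) (Set.Ici (0 : ℝ))

namespace C0Semigroup

variable {X : Type*} [NormedAddCommGroup X] [NormedSpace ℂ X]

/-- The domain of the infinitesimal generator. -/
def genDomain (S : C0Semigroup X) : Set X :=
  {x | ∃ y : X, Tendsto (fun t : ℝ => t⁻¹ • (S.T t x - x)) (𝓝[>] 0) (𝓝 y)}

/-- `A : X → X` (total function, with junk values outside `D`) together with `D` is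
*the* infinitesimal generator of `S` if `D` is exactly the set where the right
derivative of `t ↦ T(t)x` exists at `0`, and `A x` is that derivative for `x ∈ D`. -/
def IsGenerator (S : C0Semigroup X) (A : X → X) (D : Set X) : Prop :=
  D = S.genDomain ∧
    ∀ x ∈ D, Tendsto (fun t : ℝ => t⁻¹ • (S.T t x - x)) (𝓝[>] 0) (𝓝 (A x))

end C0Semigroup

/-- The domain `D(fⁿ)` of the `n`-th power of an operator `f` defined on `D ⊆ X`. -/
def iterDomain {X : Type*} (f : X → X) (D : Set X) : ℕ → Set X
  | 0 => Set.univ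
  | n + 1 => {x ∈ D | f x ∈ iterDomain f D n}

/-!
Integrating the derivative of `s ↦ e^{λ(t-s)} T(s)x` over `[0, t]` gives, for `x ∈ D(A)`,
`(e^{λt} - T(t))x = B(λ - A)x` with `B z = ∫₀ᵗ e^{λ(t-s)} T(s)z ds`. Since `B` commutes with
`T(t)`, this iterates to `(e^{λt} - T(t))ⁿx = Bⁿ(λ - A)ⁿx` on `D(Aⁿ)`, and `B` is bounded by the
uniform boundedness principle, so `‖(e^{λt} - T(t))ⁿx‖^{1/n} ≤ ‖B‖ ‖(λ - A)ⁿx‖^{1/n} → 0`.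
-/

theorem exists_norm_le_of_continuousOn_apply {α 𝕜 E F : Type*} [TopologicalSpace α]
    [NontriviallyNormedField 𝕜] [SeminormedAddCommGroup E] [NormedSpace 𝕜 E] [CompleteSpace E]
    [SeminormedAddCommGroup F] [NormedSpace 𝕜 F] {K : α → E →L[𝕜] F} {s : Set α}
    (hs : IsCompact s) (hK : ∀ x, ContinuousOn (fun a => K a x) s) :
    ∃ M, ∀ a ∈ s, ‖K a‖ ≤ M := by
  obtain ⟨M, hM⟩ := banach_steinhaus (g := fun a : s => K a) fun x =>
    (hs.exists_bound_of_continuousOn (hK x)).imp fun _ hC a => hC a a.2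
  exact ⟨M, fun a ha => hM ⟨a, ha⟩⟩

theorem norm_iterate_le_of_norm_le {E : Type*} [SeminormedAddCommGroup E] {B : E → E} {C : ℝ}
    (hC : 0 ≤ C) (hB : ∀ z, ‖B z‖ ≤ C * ‖z‖) (n : ℕ) (z : E) : ‖B^[n] z‖ ≤ C ^ n * ‖z‖ := by
  induction n with
  | zero => simp
  | succ n ih =>
    calc ‖B^[n + 1] z‖ = ‖B (B^[n] z)‖ := by rw [Function.iterate_succ_apply']
      _ ≤ C * (C ^ n * ‖z‖) := (hB _).trans (mul_le_mul_of_nonneg_left ih hC)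
      _ = C ^ (n + 1) * ‖z‖ := by ring

theorem tendsto_rpow_one_div_zero_of_le_pow_mul {a b : ℕ → ℝ} {C : ℝ} (ha : ∀ n, 0 ≤ a n)
    (hb : ∀ n, 0 ≤ b n) (hC : 0 ≤ C) (hab : ∀ n, a n ≤ C ^ n * b n)
    (hlim : Tendsto (fun n => b n ^ (1 / (n : ℝ))) atTop (𝓝 0)) :
    Tendsto (fun n => a n ^ (1 / (n : ℝ))) atTop (𝓝 0) := by
  refine squeeze_zero' (.of_forall fun n => Real.rpow_nonneg (ha n) _) ?_
    (by simpa only [mul_zero] using hlim.const_mul C)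
  filter_upwards [eventually_ne_atTop 0] with n hn
  calc a n ^ (1 / (n : ℝ)) ≤ (C ^ n * b n) ^ (1 / (n : ℝ)) :=
        Real.rpow_le_rpow (ha n) (hab n) (by positivity)
    _ = C * b n ^ (1 / (n : ℝ)) := by
        rw [Real.mul_rpow (by positivity) (hb n), one_div, Real.pow_rpow_inv_natCast hC hn]

theorem iterate_apply_eq_of_mem_iterDomain {α : Type*} {E B F : α → α} {D : Set α}
    (hEB : Function.Commute E B) (hE : ∀ z ∈ D, E z = B (F z)) {n : ℕ} {x : α}
    (hx : x ∈ iterDomain F D n) : E^[n] x = B^[n] (F^[n] x) := by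
  induction n generalizing x with
  | zero => rfl
  | succ n ih =>
    obtain ⟨hxD, hFx⟩ := hx
    rw [Function.iterate_succ_apply, hE x hxD, hEB.iterate_left n, ih hFx,
      Function.iterate_succ_apply' B, Function.iterate_succ_apply F]

namespace C0Semigroup

variable {X : Type*} [NormedAddCommGroup X] [NormedSpace ℂ X]

theorem commute (S : C0Semigroup X) {s t : ℝ} (hs : 0 ≤ s) (ht : 0 ≤ t) :
    Commute (S.T s) (S.T t) :=
  (S.map_add' s t hs ht).symm.trans (add_comm s t ▸ S.map_add' t s ht hs)

theorem hasDerivWithinAt_orbit (S : C0Semigroup X) {x y : X}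
    (hx : Tendsto (fun h : ℝ => h⁻¹ • (S.T h x - x)) (𝓝[>] 0) (𝓝 y)) {s : ℝ} (hs : 0 ≤ s) :
    HasDerivWithinAt (fun r => S.T r x) (S.T s y) (Set.Ioi s) s := by
  rw [hasDerivWithinAt_iff_tendsto_slope' (Set.self_notMem_Ioi (a := s))]
  have hslope : ∀ r ∈ Set.Ioi s,
      S.T s ((r - s)⁻¹ • (S.T (r - s) x - x)) = slope (fun r => S.T r x) s r := by
    intro r hr
    have hsplit : S.T r x = S.T s (S.T (r - s) x) := by
      rw [← ContinuousLinearMap.comp_apply, ← S.map_add' s (r - s) hs (by linarith [hr.out]),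
        add_sub_cancel]
    rw [slope_def_module, hsplit, ← map_sub, ← ContinuousLinearMap.map_smul_of_tower]
  have hshift : Tendsto (fun r : ℝ => r - s) (𝓝[>] s) (𝓝[>] 0) :=
    tendsto_nhdsWithin_of_tendsto_nhds_of_eventually_within _
      (((continuous_sub_right s).tendsto' s 0 (sub_self s)).mono_left nhdsWithin_le_nhds)
      (eventually_nhdsWithin_of_forall fun _ hr => Set.mem_Ioi.mpr (sub_pos.mpr hr))
  exact (((S.T s).continuous.tendsto y).comp (hx.comp hshift)).congr'
    (eventually_nhdsWithin_of_forall hslope)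

/-- The operator `B(λ, t)`. -/
noncomputable def expIntegral (S : C0Semigroup X) (l : ℂ) (t : ℝ) (z : X) : X :=
  ∫ s in (0 : ℝ)..t, Complex.exp (l * (t - s)) • S.T s z

theorem continuousOn_expIntegrand (S : C0Semigroup X) (l : ℂ) (t : ℝ) (z : X) :
    ContinuousOn (fun s : ℝ => Complex.exp (l * (t - s)) • S.T s z) (Set.Ici 0) :=
  (by fun_prop : Continuous fun s : ℝ => Complex.exp (l * (t - s))).continuousOn.smul
    (S.strong_cont' z)

theorem intervalIntegrable_expIntegrand (S : C0Semigroup X) (l : ℂ) {t : ℝ} (ht : 0 ≤ t)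
    (z : X) :
    IntervalIntegrable (fun s : ℝ => Complex.exp (l * (t - s)) • S.T s z) volume 0 t :=
  ((S.continuousOn_expIntegrand l t z).mono fun _ hs => hs.1).intervalIntegrable_of_Icc ht

variable [CompleteSpace X]

theorem exists_norm_expIntegral_le (S : C0Semigroup X) (l : ℂ) {t : ℝ} (ht : 0 ≤ t) :
    ∃ C, 0 ≤ C ∧ ∀ z, ‖S.expIntegral l t z‖ ≤ C * ‖z‖ := by
  obtain ⟨M, hM⟩ := exists_norm_le_of_continuousOn_apply
    (K := fun s : ℝ => Complex.exp (l * (t - s)) • S.T s) isCompact_Icc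
    fun z => (S.continuousOn_expIntegrand l t z).mono fun _ hs => hs.1
  have hM0 : 0 ≤ M := (norm_nonneg _).trans (hM 0 ⟨le_rfl, ht⟩)
  refine ⟨M * t, by positivity, fun z => ?_⟩
  have hbound : ∀ s ∈ Set.uIoc 0 t, ‖Complex.exp (l * (t - s)) • S.T s z‖ ≤ M * ‖z‖ := by
    intro s hs
    rw [Set.uIoc_of_le ht] at hs
    exact ((Complex.exp (l * (t - s)) • S.T s).le_opNorm z).trans
      (mul_le_mul_of_nonneg_right (hM s (Set.Ioc_subset_Icc_self hs)) (norm_nonneg z))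
  calc ‖S.expIntegral l t z‖ ≤ M * ‖z‖ * |t - 0| := norm_integral_le_of_norm_le_const hbound
    _ = M * t * ‖z‖ := by rw [sub_zero, abs_of_nonneg ht]; ring

theorem map_expIntegral (S : C0Semigroup X) (l : ℂ) {t : ℝ} (ht : 0 ≤ t) (L : X →L[ℂ] X)
    (hL : ∀ s, 0 ≤ s → Commute L (S.T s)) (z : X) :
    L (S.expIntegral l t z) = S.expIntegral l t (L z) := by
  rw [expIntegral, ← L.intervalIntegral_comp_comm (S.intervalIntegrable_expIntegrand l ht z)]
  refine integral_congr fun s hs => ?_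
  rw [Set.uIcc_of_le ht] at hs
  rw [L.map_smul]
  exact congrArg _ (DFunLike.congr_fun (hL s hs.1).eq z)

theorem exp_smul_sub_apply_eq_expIntegral (S : C0Semigroup X) (l : ℂ) {t : ℝ} (ht : 0 ≤ t)
    {x y : X} (hx : Tendsto (fun h : ℝ => h⁻¹ • (S.T h x - x)) (𝓝[>] 0) (𝓝 y)) :
    Complex.exp (l * t) • x - S.T t x = S.expIntegral l t (l • x - y) := by
  have hderiv : ∀ s ∈ Set.Ioo 0 t,
      HasDerivWithinAt (fun r : ℝ => Complex.exp (l * (t - r)) • S.T r x)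
        (-(Complex.exp (l * (t - s)) • S.T s (l • x - y))) (Set.Ioi s) s := by
    intro s hs
    have hexp : HasDerivAt (fun r : ℝ => Complex.exp (l * (t - r)))
        (Complex.exp (l * (t - s)) * (l * (0 - 1))) s :=
      ((((hasDerivAt_const _ (t : ℂ)).sub (hasDerivAt_id _)).const_mul l).cexp).comp_ofReal
    refine (hexp.hasDerivWithinAt.smul (S.hasDerivWithinAt_orbit hx hs.1.le)).congr_deriv ?_
    rw [map_sub, map_smul]
    module
  have hftc := integral_eq_sub_of_hasDeriv_right_of_le ht
    ((S.continuousOn_expIntegrand l t x).mono fun _ hs => hs.1) hderiv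
    (S.intervalIntegrable_expIntegrand l ht _).neg
  rw [intervalIntegral.integral_neg] at hftc
  simp only [sub_self, mul_zero, Complex.exp_zero, one_smul, Complex.ofReal_zero, sub_zero,
    S.map_zero', one_apply_eq_self] at hftc
  rw [expIntegral, neg_eq_iff_eq_neg.mp hftc, neg_sub]

end C0Semigroup

/-- Lemma 2.2(4): the quasi-nilpotent part satisfies `H₀(λ I − A) ⊆ H₀(e^{λt} I − T(t))`
for every `λ ∈ ℂ` and `t > 0`, where
`H₀(S) = {x ∈ ⋂ₙ D(Sⁿ) : ‖Sⁿ x‖^{1/n} → 0}`. -/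
theorem stmt11 {X : Type*} [NormedAddCommGroup X] [NormedSpace ℂ X] [CompleteSpace X]
    (S : C0Semigroup X) (A : X → X) (D : Set X) (hgen : S.IsGenerator A D)
    (l : ℂ) (t : ℝ) (ht : 0 < t) :
    {x : X | (∀ n : ℕ, x ∈ iterDomain (fun x : X => l • x - A x) D n) ∧
        Filter.Tendsto
          (fun n : ℕ => ‖(fun x : X => l • x - A x)^[n] x‖ ^ (1 / (n : ℝ)))
          Filter.atTop (nhds 0)}
      ⊆ {x : X |
        Filter.Tendsto
          (fun n : ℕ => ‖((Complex.exp (l * t) • (1 : X →L[ℂ] X) - S.T t) ^ n) x‖ ^ (1 / (n : ℝ)))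
          Filter.atTop (nhds 0)} := by
  rintro x ⟨hdom, hlim⟩
  set E : X →L[ℂ] X := Complex.exp (l * t) • 1 - S.T t
  have hEcomm : ∀ s, 0 ≤ s → Commute E (S.T s) := fun s hs =>
    ((Commute.one_left _).smul_left _).sub_left (S.commute ht.le hs)
  have hE : ∀ z ∈ D, E z = S.expIntegral l t (l • z - A z) := fun z hz => by
    simpa [E] using S.exp_smul_sub_apply_eq_expIntegral l ht.le (hgen.2 z hz)
  obtain ⟨C, hC, hB⟩ := S.exists_norm_expIntegral_le l ht.le
  refine tendsto_rpow_one_div_zero_of_le_pow_mul (fun _ => norm_nonneg _)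
    (fun _ => norm_nonneg _) hC (fun n => ?_) hlim
  rw [FunLike.coe_pow_eq_iterate, iterate_apply_eq_of_mem_iterDomain
    (S.map_expIntegral l ht.le E hEcomm) hE (hdom n)]
  exact norm_iterate_le_of_norm_le hC hB n _
end

section
/- Let (T(t))_{t≥0} be a strongly continuous semigroup on a Banach space X with generator A, and fix t₀ > 0 and λ ∈ ℂ. Define B(λ,t₀)x = ∫₀^{t₀} e^{λ(t₀−s)} T(s)x ds, C = (1/t₀) ∫₀^{t₀} e^{−λs} B(λ,s) ds (as a bounded operator), and D = (1/t₀) e^{−λt₀}·I. Then for all x ∈ D(A): C (λ·I − A) x + D B(λ,t₀) x = x, and the operators λ·I − A, B(λ,t₀), C, D mutually commute on D(A). -/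
open Filter Topology MeasureTheory intervalIntegral

/-- `B(λ,t) x = ∫₀ᵗ e^{λ(t−s)} T(s) x ds`. -/
noncomputable def Bop {X : Type*} [NormedAddCommGroup X] [NormedSpace ℂ X]
    [CompleteSpace X] (S : C0Semigroup X) (l : ℂ) (t : ℝ) (x : X) : X :=
  ∫ s in (0:ℝ)..t, Complex.exp (l * (t - s)) • S.T s x

/-- `C = (1/t₀) ∫₀^{t₀} e^{−λs} B(λ,s) ds` (pointwise Bochner integral). -/
noncomputable def Cop {X : Type*} [NormedAddCommGroup X] [NormedSpace ℂ X]
    [CompleteSpace X] (S : C0Semigroup X) (l : ℂ) (t₀ : ℝ) (x : X) : X :=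
  (t₀ : ℂ)⁻¹ • ∫ s in (0:ℝ)..t₀, Complex.exp (-(l * s)) • Bop S l s x

/-! Differentiating `s ↦ e^{λ(t-s)} T(s)x` and integrating over `[0, t]` gives
`B(λ,t)(λ - A)x = e^{λt}x - T(t)x`; multiplying by `e^{-λt}` and averaging over `t ∈ [0, t₀]`
yields the identity. Since `T` is only strongly continuous, `B(λ,t)` and `C` are bounded by
Banach–Steinhaus rather than as operator-valued integrals. Both commute with every `T(u)`, and a
bounded operator commuting with the semigroup preserves `D(A)`, commutes with `A`, and commutes
with every `B(λ,s)`, hence with `C`. -/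

theorem exists_continuousLinearMap_eq_intervalIntegral {𝕜 E F : Type*}
    [NontriviallyNormedField 𝕜] [NormedAddCommGroup E] [NormedSpace 𝕜 E] [CompleteSpace E]
    [NormedAddCommGroup F] [NormedSpace ℝ F] [NormedSpace 𝕜 F] [SMulCommClass ℝ 𝕜 F]
    {T : ℝ → E → F} {a b : ℝ} (hlin : ∀ s ∈ Set.uIcc a b, ∃ L : E →L[𝕜] F, ⇑L = T s)
    (hcont : ∀ x, ContinuousOn (fun s => T s x) (Set.uIcc a b)) :
    ∃ L : E →L[𝕜] F, ∀ x, L x = ∫ s in a..b, T s x := by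
  choose L hL using fun s : Set.uIcc a b => hlin s s.2
  obtain ⟨C, hC⟩ : ∃ C, ∀ s, ‖L s‖ ≤ C := banach_steinhaus fun x => by
    obtain ⟨C, hC⟩ := (isCompact_uIcc.image_of_continuousOn (hcont x).norm).bddAbove
    exact ⟨C, fun s => hC ⟨s, s.2, by rw [hL]⟩⟩
  have hint : ∀ x, IntervalIntegrable (fun s => T s x) volume a b :=
    fun x => (hcont x).intervalIntegrable
  refine ⟨LinearMap.mkContinuous
    { toFun := fun x => ∫ s in a..b, T s x
      map_add' := fun x y => by
        rw [← intervalIntegral.integral_add (hint x) (hint y)]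
        refine intervalIntegral.integral_congr fun s hs => ?_
        simp only [← hL ⟨s, hs⟩, map_add]
      map_smul' := fun c x => by
        rw [RingHom.id_apply, ← intervalIntegral.integral_smul]
        refine intervalIntegral.integral_congr fun s hs => ?_
        simp only [← hL ⟨s, hs⟩, map_smul] }
    (C * |b - a|) fun x => ?_, fun x => rfl⟩
  calc ‖∫ s in a..b, T s x‖ ≤ C * ‖x‖ * |b - a| :=
        intervalIntegral.norm_integral_le_of_norm_le_const fun s hs => by
          rw [← hL ⟨s, Set.uIoc_subset_uIcc hs⟩]
          exact (L _).le_of_opNorm_le (hC _) x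
    _ = C * |b - a| * ‖x‖ := by ring

namespace C0Semigroup

variable {X : Type*} [NormedAddCommGroup X] [NormedSpace ℂ X] (S : C0Semigroup X)

def CommutesWith (L : X → X) : Prop :=
  ∀ u, 0 ≤ u → ∀ x, L (S.T u x) = S.T u (L x)

theorem commutesWith_T {u : ℝ} (hu : 0 ≤ u) : S.CommutesWith (S.T u) := fun v hv x => by
  rw [← ContinuousLinearMap.comp_apply, ← S.map_add' u v hu hv, add_comm, S.map_add' v u hv hu]
  rfl

theorem continuousOn_smul_apply {φ : ℝ → ℂ} (hφ : Continuous φ) (x : X) {t : ℝ} (ht : 0 ≤ t) :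
    ContinuousOn (fun s => φ s • S.T s x) (Set.uIcc 0 t) :=
  hφ.continuousOn.smul <| (S.strong_cont' x).mono <| Set.uIcc_of_le ht ▸ Set.Icc_subset_Ici_self

variable {S} {A : X → X} {D : Set X}

theorem IsGenerator.mem_and_apply_of_commutesWith (hgen : S.IsGenerator A D)
    {L : X →L[ℂ] X} (hL : S.CommutesWith L) {x : X} (hx : x ∈ D) :
    L x ∈ D ∧ A (L x) = L (A x) := by
  have hlim : Tendsto (fun t : ℝ => t⁻¹ • (S.T t (L x) - L x)) (𝓝[>] 0) (𝓝 (L (A x))) :=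
    ((L.continuous.tendsto _).comp (hgen.2 x hx)).congr' <|
      eventually_nhdsWithin_of_forall fun t ht => by
        simp [hL t (le_of_lt ht), L.map_smul_of_tower]
  have hmem : L x ∈ D := hgen.1 ▸ ⟨_, hlim⟩
  exact ⟨hmem, tendsto_nhds_unique (hgen.2 _ hmem) hlim⟩

theorem IsGenerator.hasDerivWithinAt_T_apply (hgen : S.IsGenerator A D) {x : X} (hx : x ∈ D)
    {s : ℝ} (hs : 0 ≤ s) : HasDerivWithinAt (fun u => S.T u x) (S.T s (A x)) (Set.Ioi s) s := by
  rw [hasDerivWithinAt_iff_tendsto_slope, Set.sdiff_singleton_eq_self Set.self_notMem_Ioi]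
  have hshift : Tendsto (fun u : ℝ => u - s) (𝓝[>] s) (𝓝[>] 0) :=
    tendsto_nhdsWithin_of_tendsto_nhds_of_eventually_within _
      (((continuous_sub_right s).tendsto' s 0 (sub_self s)).mono_left nhdsWithin_le_nhds)
      (eventually_nhdsWithin_of_forall fun u (hu : s < u) => Set.mem_Ioi.2 (sub_pos.2 hu))
  refine (((S.T s).continuous.tendsto _).comp ((hgen.2 x hx).comp hshift)).congr' <|
    eventually_nhdsWithin_of_forall fun u (hu : s < u) => ?_
  have hT : S.T u x = S.T s (S.T (u - s) x) := by
    rw [← ContinuousLinearMap.comp_apply, ← S.map_add' s (u - s) hs (sub_nonneg.2 hu.le),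
      add_sub_cancel]
  simp only [Function.comp_apply]
  rw [slope_def_module, hT, ← map_sub, ← (S.T s).map_smul_of_tower]

end C0Semigroup

section Resolvent

variable {X : Type*} [NormedAddCommGroup X] [NormedSpace ℂ X] [CompleteSpace X]
  {S : C0Semigroup X} {A : X → X} {D : Set X} (l : ℂ)

variable (S) in
theorem exists_continuousLinearMap_eq_Bop {t : ℝ} (ht : 0 ≤ t) :
    ∃ L : X →L[ℂ] X, ⇑L = Bop S l t := by
  obtain ⟨L, hL⟩ := exists_continuousLinearMap_eq_intervalIntegral
    (fun s _ => ⟨Complex.exp (l * (t - s)) • S.T s, rfl⟩)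
    fun x => S.continuousOn_smul_apply (by fun_prop) x ht
  exact ⟨L, funext hL⟩

theorem C0Semigroup.CommutesWith.apply_Bop {L : X →L[ℂ] X} (hL : S.CommutesWith L) {t : ℝ}
    (ht : 0 ≤ t) (x : X) : L (Bop S l t x) = Bop S l t (L x) := by
  unfold Bop
  rw [← L.intervalIntegral_comp_comm
    (S.continuousOn_smul_apply (by fun_prop) x ht).intervalIntegrable]
  refine intervalIntegral.integral_congr fun s hs => ?_
  rw [Set.uIcc_of_le ht] at hs
  simp only [map_smul, hL s hs.1]

theorem commutesWith_Bop {t : ℝ} (ht : 0 ≤ t) : S.CommutesWith (Bop S l t) :=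
  fun _u hu x => ((S.commutesWith_T hu).apply_Bop l ht x).symm

theorem C0Semigroup.IsGenerator.Bop_smul_sub (hgen : S.IsGenerator A D) {x : X} (hx : x ∈ D)
    {t : ℝ} (ht : 0 ≤ t) : Bop S l t (l • x - A x) = Complex.exp (l * t) • x - S.T t x := by
  have hexp : ∀ s : ℝ, HasDerivAt (fun u : ℝ => Complex.exp (l * (t - u)))
      (-(l * Complex.exp (l * (t - s)))) s := fun s => by
    simpa [mul_comm] using (((hasDerivAt_id s).const_sub t).ofReal_comp.const_mul l).cexp
  have hftc := intervalIntegral.integral_eq_sub_of_hasDeriv_right_of_le ht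
    (f := fun s => -(Complex.exp (l * (t - s)) • S.T s x))
    (f' := fun s => Complex.exp (l * (t - s)) • S.T s (l • x - A x))
    (Set.uIcc_of_le ht ▸
      (S.continuousOn_smul_apply (φ := fun s => Complex.exp (l * (t - s))) (by fun_prop) x ht).neg)
    (fun s hs => by
      convert (((hexp s).hasDerivWithinAt).smul (hgen.hasDerivWithinAt_T_apply hx hs.1.le)).neg
        using 1
      · rfl
      · rw [map_sub, map_smul]
        module)
    (S.continuousOn_smul_apply (by fun_prop) _ ht).intervalIntegrable
  rw [Bop, hftc]
  simp only [sub_self, mul_zero, Complex.exp_zero, one_smul, Complex.ofReal_zero, sub_zero,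
    S.map_zero', one_apply_eq_self]
  abel

variable (S) in
theorem continuousOn_Bop (x : X) {t : ℝ} (ht : 0 ≤ t) :
    ContinuousOn (fun s => Bop S l s x) (Set.uIcc 0 t) := by
  have hprim := intervalIntegral.continuousOn_primitive_interval (μ := volume) (a := 0) (b := t)
    ((S.continuousOn_smul_apply (φ := fun u => Complex.exp (-(l * u))) (by fun_prop) x ht
      ).integrableOn_compact isCompact_uIcc)
  refine ((by fun_prop : Continuous fun s : ℝ => Complex.exp (l * s)).continuousOn.smul
    hprim).congr fun s _ => ?_
  rw [Bop, Pi.smul_apply', ← intervalIntegral.integral_smul]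
  refine intervalIntegral.integral_congr fun u _ => ?_
  simp only [smul_smul, ← Complex.exp_add]
  ring_nf

variable (S) in
theorem continuousOn_smul_Bop (x : X) {t : ℝ} (ht : 0 ≤ t) :
    ContinuousOn (fun s : ℝ => Complex.exp (-(l * s)) • Bop S l s x) (Set.uIcc 0 t) :=
  (Continuous.continuousOn (by fun_prop)).smul (continuousOn_Bop S l x ht)

variable (S) in
theorem exists_continuousLinearMap_eq_Cop {t : ℝ} (ht : 0 ≤ t) :
    ∃ L : X →L[ℂ] X, ⇑L = Cop S l t := by
  obtain ⟨L, hL⟩ := exists_continuousLinearMap_eq_intervalIntegral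
    (T := fun (s : ℝ) x => Complex.exp (-(l * s)) • Bop S l s x)
    (fun s hs => by
      rw [Set.uIcc_of_le ht] at hs
      obtain ⟨B, hB⟩ := exists_continuousLinearMap_eq_Bop S l hs.1
      exact ⟨Complex.exp (-(l * s)) • B, by rw [FunLike.coe_smul, hB]; rfl⟩)
    fun x => continuousOn_smul_Bop S l x ht
  exact ⟨(t : ℂ)⁻¹ • L, funext fun x => by simp [Cop, hL]⟩

theorem C0Semigroup.CommutesWith.apply_Cop {L : X →L[ℂ] X} (hL : S.CommutesWith L) {t : ℝ}
    (ht : 0 ≤ t) (x : X) : L (Cop S l t x) = Cop S l t (L x) := by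
  unfold Cop
  rw [map_smul, ← L.intervalIntegral_comp_comm (continuousOn_smul_Bop S l x ht).intervalIntegrable]
  congr 1
  refine intervalIntegral.integral_congr fun s hs => ?_
  rw [Set.uIcc_of_le ht] at hs
  simp only [map_smul, hL.apply_Bop l hs.1]

theorem commutesWith_Cop {t : ℝ} (ht : 0 ≤ t) : S.CommutesWith (Cop S l t) :=
  fun _u hu x => ((S.commutesWith_T hu).apply_Cop l ht x).symm

theorem C0Semigroup.IsGenerator.Cop_smul_sub_add_smul_Bop (hgen : S.IsGenerator A D) {x : X}
    (hx : x ∈ D) {t : ℝ} (ht : 0 < t) :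
    Cop S l t (l • x - A x) + ((t : ℂ)⁻¹ * Complex.exp (-(l * t))) • Bop S l t x = x := by
  set G : X := ∫ s in (0 : ℝ)..t, Complex.exp (-(l * s)) • S.T s x
  have hCop : Cop S l t (l • x - A x) = (t : ℂ)⁻¹ • (t • x - G) := by
    have hintegrand : ∀ s ∈ Set.uIcc 0 t, Complex.exp (-(l * s)) • Bop S l s (l • x - A x)
        = x - Complex.exp (-(l * s)) • S.T s x := fun s hs => by
      rw [Set.uIcc_of_le ht.le] at hs
      rw [hgen.Bop_smul_sub l hx hs.1, smul_sub, smul_smul, ← Complex.exp_add, neg_add_cancel,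
        Complex.exp_zero, one_smul]
    rw [Cop, intervalIntegral.integral_congr hintegrand, intervalIntegral.integral_sub
      intervalIntegrable_const (S.continuousOn_smul_apply (by fun_prop) x ht.le).intervalIntegrable,
      intervalIntegral.integral_const, sub_zero]
  have hBop : Complex.exp (-(l * t)) • Bop S l t x = G := by
    rw [Bop, ← intervalIntegral.integral_smul]
    refine intervalIntegral.integral_congr fun s _ => ?_
    simp only [smul_smul, ← Complex.exp_add]
    ring_nf
  rw [hCop, mul_smul, hBop, smul_sub, ← Complex.coe_smul, smul_smul,
    inv_mul_cancel₀ (Complex.ofReal_ne_zero.2 ht.ne'), one_smul, sub_add_cancel]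

end Resolvent

/-- Lemma 3.1: with `C = (1/t₀)∫₀^{t₀} e^{−λs} B(λ,s) ds` and `D = (1/t₀)e^{−λt₀} I`,
one has `C (λI − A) x + D B(λ,t₀) x = x` for every `x ∈ D(A)`, and the operators
`λI − A`, `B(λ,t₀)`, `C`, `D` mutually commute on `D(A)`. -/
theorem stmt13 {X : Type*} [NormedAddCommGroup X] [NormedSpace ℂ X] [CompleteSpace X]
    (S : C0Semigroup X) (A : X → X) (D : Set X) (hgen : S.IsGenerator A D)
    (l : ℂ) (t₀ : ℝ) (ht₀ : 0 < t₀) (x : X) (hx : x ∈ D) :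
    -- the identity  C (λI − A) x + D B(λ,t₀) x = x
    Cop S l t₀ (l • x - A x)
        + ((t₀ : ℂ)⁻¹ * Complex.exp (-(l * t₀))) • Bop S l t₀ x = x ∧
    -- B(λ,t₀) and C map D(A) into itself
    Bop S l t₀ x ∈ D ∧ Cop S l t₀ x ∈ D ∧
    -- B(λ,t₀) commutes with λI − A on D(A)
    Bop S l t₀ (l • x - A x) = l • Bop S l t₀ x - A (Bop S l t₀ x) ∧
    -- C commutes with λI − A on D(A)
    Cop S l t₀ (l • x - A x) = l • Cop S l t₀ x - A (Cop S l t₀ x) ∧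
    -- B(λ,t₀) commutes with C
    Bop S l t₀ (Cop S l t₀ x) = Cop S l t₀ (Bop S l t₀ x) := by
  obtain ⟨B, hB⟩ := exists_continuousLinearMap_eq_Bop S l ht₀.le
  obtain ⟨C, hC⟩ := exists_continuousLinearMap_eq_Cop S l ht₀.le
  have hBT : S.CommutesWith B := hB ▸ commutesWith_Bop l ht₀.le
  have hCT : S.CommutesWith C := hC ▸ commutesWith_Cop l ht₀.le
  obtain ⟨hBD, hBA⟩ := hgen.mem_and_apply_of_commutesWith hBT hx
  obtain ⟨hCD, hCA⟩ := hgen.mem_and_apply_of_commutesWith hCT hx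
  refine ⟨hgen.Cop_smul_sub_add_smul_Bop l hx ht₀, hB ▸ hBD, hC ▸ hCD, ?_, ?_, ?_⟩
  · rw [← hB, map_sub, map_smul, hBA]
  · rw [← hC, map_sub, map_smul, hCA]
  · rw [← hB]
    exact hBT.apply_Cop l ht₀.le x
end

section
/- Let (T(t))_{t≥0} be a strongly continuous semigroup on a Banach space X with generator A, let λ ∈ ℂ, t₀ > 0, and n a positive integer. If R((e^{λt₀}·I − T(t₀))ⁿ) is closed in X and the Bochner-integral operator B(λ,t₀) has N(B(λ,t₀)ⁿ) ⊆ R((λ·I − A)ⁿ), then R((λ·I − A)ⁿ) is closed. -/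
open Filter Topology MeasureTheory intervalIntegral

/-!
The unbounded operator `(λ - A)ⁿ` is traded for bounded ones. For `e^μ` outside the spectrum
of `T(1)`, `R = B(μ,1) (e^μ - T(1))⁻¹` is the resolvent `(μ - A)⁻¹`, so `D(Aⁿ)` is the range
of `Rⁿ` and the range of `(λ - A)ⁿ` is the range of `Kⁿ`, where `K = (λ - A) R = 1 + (λ - μ) R`.
With `B = B(λ,t₀)`, `C = e^{λt₀} - T(t₀)` and the bounded operator
`Γ = (μ - A) B = (μ - λ) B + C`, the relations `Γ K = C`, `R Γ = B`, `B K = C R` between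
commuting operators give `ran Kⁿ = (Γⁿ)⁻¹ (ran Cⁿ)`; the inclusion `⊇` is where
`N(Bⁿ) ⊆ ran Kⁿ` enters.
-/

theorem iterDomain_succ_subset {α : Type*} (f : α → α) (D : Set α) :
    ∀ n, iterDomain f D (n + 1) ⊆ iterDomain f D n
  | 0 => Set.subset_univ _
  | n + 1 => fun _ hx => ⟨hx.1, iterDomain_succ_subset f D n hx.2⟩

section IterDomain

-- `f` stands for `λ - A`, `R` for `(μ - A)⁻¹` and `a` for `λ - μ`.
variable {𝕜 V : Type*} [CommRing 𝕜] [AddCommGroup V] [Module 𝕜 V]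
  {f : V → V} {D : Set V} {R : Module.End 𝕜 V} {a : 𝕜}

theorem apply_pow_succ_apply (hf : ∀ v, f (R v) = v + a • R v) (n : ℕ) (v : V) :
    f ((R ^ (n + 1)) v) = (R ^ n) ((1 + a • R) v) := by
  rw [pow_succ', Module.End.mul_apply, hf, ← Module.End.mul_apply, ← pow_succ', pow_succ]
  simp

theorem iterate_apply_pow_apply (hf : ∀ v, f (R v) = v + a • R v) (n : ℕ) (v : V) :
    f^[n] ((R ^ n) v) = ((1 + a • R) ^ n) v := by
  induction n generalizing v with
  | zero => rfl
  | succ n ih =>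
    rw [Function.iterate_succ_apply, apply_pow_succ_apply hf, ih, ← Module.End.mul_apply,
      ← pow_succ]

theorem iterDomain_eq_range_pow (hD : Set.range R = D) (hf : ∀ v, f (R v) = v + a • R v) :
    ∀ n, iterDomain f D n = Set.range (R ^ n)
  | 0 => by rw [pow_zero, Module.End.coe_one, Set.range_id]; rfl
  | n + 1 => by
    have ih : ∀ y, y ∈ iterDomain f D n ↔ y ∈ LinearMap.range (R ^ n) := fun y => by
      rw [LinearMap.mem_range, ← Set.mem_range, iterDomain_eq_range_pow hD hf n]
    ext x
    constructor
    · intro hx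
      obtain ⟨w, rfl⟩ : x ∈ Set.range R := hD ▸ hx.1
      have hRw := (ih _).1 (iterDomain_succ_subset f D n hx)
      obtain ⟨u, hu⟩ : w ∈ LinearMap.range (R ^ n) := by
        simpa [hf] using sub_mem ((ih _).1 hx.2) (Submodule.smul_mem _ a hRw)
      exact ⟨u, by rw [pow_succ', Module.End.mul_apply, hu]⟩
    · rintro ⟨u, rfl⟩
      refine ⟨hD ▸ ?_, (ih _).2 ⟨_, (apply_pow_succ_apply hf n u).symm⟩⟩
      rw [pow_succ', Module.End.mul_apply]
      exact Set.mem_range_self _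

theorem image_iterate_iterDomain_eq_range (hD : Set.range R = D)
    (hf : ∀ v, f (R v) = v + a • R v) (n : ℕ) :
    f^[n] '' iterDomain f D n = Set.range ⇑((1 + a • R) ^ n) := by
  rw [iterDomain_eq_range_pow hD hf, ← Set.range_comp]
  exact congrArg Set.range (funext (iterate_apply_pow_apply hf n))

end IterDomain

theorem isClosed_range_pow_of_factorization {𝕜 M : Type*} [Semiring 𝕜] [TopologicalSpace M]
    [AddCommGroup M] [Module 𝕜 M] {B C R K Γ : M →L[𝕜] M}
    (hΓK : Γ * K = C) (hRΓ : R * Γ = B) (hBK : B * K = C * R)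
    (hcΓK : Commute Γ K) (hcRΓ : Commute R Γ) (hcCR : Commute C R) (hcBK : Commute B K)
    {n : ℕ} (hC : IsClosed (Set.range (C ^ n)))
    (hker : ∀ x, (B ^ n) x = 0 → x ∈ Set.range (K ^ n)) :
    IsClosed (Set.range (K ^ n)) := by
  suffices h : Set.range (K ^ n) = (Γ ^ n) ⁻¹' Set.range (C ^ n) from
    h ▸ hC.preimage (Γ ^ n).continuous
  ext x
  constructor
  · rintro ⟨y, rfl⟩
    exact ⟨y, by rw [← hΓK, hcΓK.mul_pow, mul_apply_eq_comp]⟩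
  · rintro ⟨c, hc⟩
    have hB : (B ^ n) x = (B ^ n) ((K ^ n) c) :=
      calc (B ^ n) x = (R ^ n) ((Γ ^ n) x) := by rw [← hRΓ, hcRΓ.mul_pow, mul_apply_eq_comp]
        _ = (C ^ n) ((R ^ n) c) := by
          rw [← hc, ← mul_apply_eq_comp, ← mul_apply_eq_comp, (hcCR.pow_pow n n).eq]
        _ = (B ^ n) ((K ^ n) c) := by
          rw [← mul_apply_eq_comp, ← mul_apply_eq_comp, ← hcCR.mul_pow, ← hBK, hcBK.mul_pow]
    obtain ⟨y, hy⟩ := hker (x - (K ^ n) c) (by rw [map_sub, hB, sub_self])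
    exact ⟨y + c, by rw [map_add, hy, sub_add_cancel]⟩

theorem ContinuousOn.tendsto_inv_smul_integral_right {E : Type*} [NormedAddCommGroup E]
    [NormedSpace ℝ E] [CompleteSpace E] {f : ℝ → E} {a : ℝ} (hf : ContinuousOn f (Set.Ici a)) :
    Tendsto (fun h : ℝ => h⁻¹ • ∫ u in a..a + h, f u) (𝓝[>] 0) (𝓝 (f a)) := by
  have hd : HasDerivWithinAt (fun u => ∫ x in a..u, f x) (f a) (Set.Ici a) a :=
    integral_hasDerivWithinAt_right IntervalIntegrable.refl
      ((hf.mono Set.Ioi_subset_Ici_self).stronglyMeasurableAtFilter_nhdsWithin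
        measurableSet_Ioi a)
      ((hf a Set.self_mem_Ici).mono Set.Ioi_subset_Ici_self)
  have hslope := (hasDerivWithinAt_iff_tendsto_slope' (lt_irrefl a)).1 hd.Ioi_of_Ici
  have hshift : Tendsto (fun h : ℝ => a + h) (𝓝[>] 0) (𝓝[>] a) :=
    tendsto_nhdsWithin_of_tendsto_nhds_of_eventually_within _
      ((continuous_const_add a).tendsto' 0 a (add_zero a) |>.mono_left nhdsWithin_le_nhds)
      (eventually_nhdsWithin_of_forall fun h hh => by simpa using hh)
  refine (hslope.comp hshift).congr fun h => ?_
  simp [slope_def_module]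

theorem Complex.tendsto_inv_smul_exp_mul_sub_one (c : ℂ) :
    Tendsto (fun h : ℝ => h⁻¹ • (Complex.exp (c * h) - 1)) (𝓝[>] 0) (𝓝 c) := by
  have hd : HasDerivAt (fun h : ℝ => Complex.exp (c * h)) c 0 := by
    simpa using ((Complex.hasDerivAt_exp (c * 0)).comp 0
      ((hasDerivAt_id (0 : ℂ)).const_mul c)).comp_ofReal
  simpa using hd.tendsto_slope_zero_right

namespace C0Semigroup

variable {X : Type*} [NormedAddCommGroup X] [NormedSpace ℂ X] (S : C0Semigroup X)

theorem T_add_apply {s t : ℝ} (hs : 0 ≤ s) (ht : 0 ≤ t) (x : X) :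
    S.T (s + t) x = S.T s (S.T t x) := by
  rw [S.map_add' s t hs ht]; rfl

theorem commute_T {s t : ℝ} (hs : 0 ≤ s) (ht : 0 ≤ t) : Commute (S.T s) (S.T t) := by
  rw [Commute, SemiconjBy, ContinuousLinearMap.mul_def, ContinuousLinearMap.mul_def,
    ← S.map_add' s t hs ht, ← S.map_add' t s ht hs, add_comm]

def commutant : Subalgebra ℂ (X →L[ℂ] X) := Subalgebra.centralizer ℂ (S.T '' Set.Ici 0)

variable {S} in
theorem mem_commutant {L : X →L[ℂ] X} :
    L ∈ S.commutant ↔ ∀ t, 0 ≤ t → Commute (S.T t) L := by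
  simp [commutant, Subalgebra.mem_centralizer_iff, Commute, SemiconjBy]

theorem T_mem_commutant {t : ℝ} (ht : 0 ≤ t) : S.T t ∈ S.commutant :=
  mem_commutant.2 fun _ hs => S.commute_T hs ht

noncomputable def cOp (c : ℂ) (t : ℝ) : X →L[ℂ] X := Complex.exp (c * t) • 1 - S.T t

theorem cOp_mem_commutant (c : ℂ) {t : ℝ} (ht : 0 ≤ t) : S.cOp c t ∈ S.commutant :=
  sub_mem (Subalgebra.smul_mem _ (one_mem _) _) (S.T_mem_commutant ht)

variable {S} in
theorem commute_cOp {L : X →L[ℂ] X} (hL : L ∈ S.commutant) (c : ℂ) {t : ℝ} (ht : 0 ≤ t) :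
    Commute L (S.cOp c t) :=
  ((Commute.one_right L).smul_right _).sub_right (mem_commutant.1 hL t ht).symm

theorem continuousOn_integrand (c : ℂ) (t : ℝ) (x : X) :
    ContinuousOn (fun s : ℝ => Complex.exp (c * (t - s)) • S.T s x) (Set.Ici 0) :=
  (Continuous.continuousOn (by fun_prop)).smul (S.strong_cont' x)

theorem intervalIntegrable_integrand (c : ℂ) (t : ℝ) (x : X) {a b : ℝ} (ha : 0 ≤ a)
    (hb : 0 ≤ b) :
    IntervalIntegrable (fun s : ℝ => Complex.exp (c * (t - s)) • S.T s x) volume a b :=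
  ((S.continuousOn_integrand c t x).mono fun _ hs =>
    le_trans (le_min ha hb) hs.1).intervalIntegrable

variable [CompleteSpace X]

theorem exists_norm_integrand_le (c : ℂ) (t : ℝ) :
    ∃ M, ∀ s ∈ Set.Icc 0 t, ∀ x : X, ‖Complex.exp (c * (t - s)) • S.T s x‖ ≤ M * ‖x‖ := by
  let g : Set.Icc 0 t → X →L[ℂ] X := fun s => Complex.exp (c * (t - s)) • S.T s
  have hg : ∀ x, ∃ C, ∀ s, ‖g s x‖ ≤ C := fun x => by
    obtain ⟨C, hC⟩ := isCompact_Icc.exists_bound_of_continuousOn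
      ((S.continuousOn_integrand c t x).mono Set.Icc_subset_Ici_self)
    exact ⟨C, fun s => hC s s.2⟩
  obtain ⟨M, hM⟩ := banach_steinhaus hg
  exact ⟨M, fun s hs x => ((g ⟨s, hs⟩).le_opNorm x).trans (by gcongr; exact hM ⟨s, hs⟩)⟩

theorem exists_isUnit_cOp {t : ℝ} (ht : t ≠ 0) : ∃ μ : ℂ, IsUnit (S.cOp μ t) := by
  obtain ⟨r, hr0, hr⟩ : ∃ r : ℝ, 0 < r ∧ ‖S.T t‖ * ‖(1 : X →L[ℂ] X)‖ < r :=
    ⟨_, by positivity, lt_add_one _⟩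
  refine ⟨Complex.log r / t, ?_⟩
  have hres : (r : ℂ) ∈ resolventSet ℂ (S.T t) :=
    spectrum.mem_resolventSet_of_norm_lt_mul (by rwa [Complex.norm_of_nonneg hr0.le])
  rwa [spectrum.mem_resolventSet_iff, Algebra.algebraMap_eq_smul_one,
    ← Complex.exp_log (Complex.ofReal_ne_zero.2 hr0.ne'),
    ← div_mul_cancel₀ (Complex.log r) (Complex.ofReal_ne_zero.2 ht)] at hres

noncomputable def bOp (c : ℂ) (t : ℝ) (ht : 0 ≤ t) : X →L[ℂ] X :=
  LinearMap.mkContinuousOfExistsBound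
    { toFun := Bop S c t
      map_add' := fun x y => by
        simp only [Bop, map_add, smul_add]
        exact integral_add (S.intervalIntegrable_integrand c t x le_rfl ht)
          (S.intervalIntegrable_integrand c t y le_rfl ht)
      map_smul' := fun a x => by
        simp only [Bop, map_smul, smul_comm _ a, RingHom.id_apply]
        exact intervalIntegral.integral_smul a _ }
    (by
      obtain ⟨M, hM⟩ := S.exists_norm_integrand_le c t
      refine ⟨M * t, fun x => ?_⟩
      have := norm_integral_le_of_norm_le_const (a := 0) (b := t) fun s hs =>
        hM s (Set.Ioc_subset_Icc_self (Set.uIoc_of_le ht ▸ hs)) x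
      simpa [Bop, abs_of_nonneg ht, mul_right_comm] using this)

theorem bOp_apply (c : ℂ) {t : ℝ} (ht : 0 ≤ t) (x : X) : S.bOp c t ht x = Bop S c t x :=
  rfl

variable {S} in
theorem commute_bOp {L : X →L[ℂ] X} (hL : L ∈ S.commutant) (c : ℂ) {t : ℝ} (ht : 0 ≤ t) :
    Commute L (S.bOp c t ht) := by
  ext x
  rw [mul_apply_eq_comp, mul_apply_eq_comp, bOp_apply, bOp_apply, Bop, Bop,
    ← L.intervalIntegral_comp_comm (S.intervalIntegrable_integrand c t x le_rfl ht)]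
  refine integral_congr fun s hs => ?_
  have hs0 : 0 ≤ s := le_trans (le_min le_rfl ht) hs.1
  simp only [map_smul, ← mul_apply_eq_comp, (mem_commutant.1 hL s hs0).eq]

theorem bOp_mem_commutant (c : ℂ) {t : ℝ} (ht : 0 ≤ t) : S.bOp c t ht ∈ S.commutant :=
  mem_commutant.2 fun _ hs => commute_bOp (S.T_mem_commutant hs) c ht

theorem T_apply_Bop (c : ℂ) {t h : ℝ} (ht : 0 ≤ t) (hh : 0 ≤ h) (x : X) :
    S.T h (Bop S c t x) = Complex.exp (c * h) • (Bop S c t x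
      + (∫ s in t..t + h, Complex.exp (c * (t - s)) • S.T s x)
      - ∫ s in 0..h, Complex.exp (c * (t - s)) • S.T s x) := by
  set φ := fun s : ℝ => Complex.exp (c * (t - s)) • S.T s x
  have hφ {a b : ℝ} (ha : 0 ≤ a) (hb : 0 ≤ b) : IntervalIntegrable φ volume a b :=
    S.intervalIntegrable_integrand c t x ha hb
  have hsplit : ∫ s in h..t + h, φ s = (∫ s in 0..t, φ s) + (∫ s in t..t + h, φ s)
      - ∫ s in 0..h, φ s := by
    rw [integral_add_adjacent_intervals (hφ le_rfl ht) (hφ ht (by positivity)),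
      ← integral_add_adjacent_intervals (hφ le_rfl hh) (hφ hh (by positivity)),
      add_sub_cancel_left]
  calc S.T h (Bop S c t x) = ∫ s in 0..t, Complex.exp (c * h) • φ (s + h) := by
        rw [Bop, ← (S.T h).intervalIntegral_comp_comm (hφ le_rfl ht)]
        refine integral_congr fun s hs => ?_
        have hs0 : 0 ≤ s := le_trans (le_min le_rfl ht) hs.1
        simp only [φ, map_smul, smul_smul, ← Complex.exp_add, ← S.T_add_apply hh hs0,
          add_comm h s]
        congr 2
        push_cast
        ring
    _ = _ := by
        rw [intervalIntegral.integral_smul, integral_comp_add_right, zero_add, hsplit]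
        rfl

theorem tendsto_inv_smul_T_Bop_sub (c : ℂ) {t : ℝ} (ht : 0 ≤ t) (x : X) :
    Tendsto (fun h : ℝ => h⁻¹ • (S.T h (Bop S c t x) - Bop S c t x)) (𝓝[>] 0)
      (𝓝 (c • Bop S c t x - S.cOp c t x)) := by
  set φ := fun s : ℝ => Complex.exp (c * (t - s)) • S.T s x
  have hexp : Tendsto (fun h : ℝ => Complex.exp (c * h)) (𝓝[>] 0) (𝓝 1) :=
    ((by fun_prop : Continuous fun h : ℝ => Complex.exp (c * h)).tendsto' 0 1
      (by simp)).mono_left nhdsWithin_le_nhds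
  have hlim := ((Complex.tendsto_inv_smul_exp_mul_sub_one c).smul_const (Bop S c t x)).add
    (hexp.smul (((S.continuousOn_integrand c t x).mono (Set.Ici_subset_Ici.2 ht)
      |>.tendsto_inv_smul_integral_right).sub
      (S.continuousOn_integrand c t x).tendsto_inv_smul_integral_right))
  have hval : c • Bop S c t x + (1 : ℂ) • (φ t - φ 0) = c • Bop S c t x - S.cOp c t x := by
    simp [φ, cOp, S.map_zero']
    abel
  refine (hval ▸ hlim).congr' (eventually_nhdsWithin_of_forall fun h hh => ?_)
  show _ = h⁻¹ • (S.T h (Bop S c t x) - Bop S c t x)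
  rw [S.T_apply_Bop c ht (le_of_lt hh), zero_add, Complex.real_smul, Complex.ofReal_inv]
  module

end C0Semigroup

def IsResolvent {X : Type*} [NormedAddCommGroup X] [NormedSpace ℂ X] (A : X → X) (D : Set X)
    (μ : ℂ) (R : X →L[ℂ] X) : Prop :=
  Set.range R = D ∧ ∀ x, μ • R x - A (R x) = x

namespace IsResolvent

variable {X : Type*} [NormedAddCommGroup X] [NormedSpace ℂ X] {A : X → X} {D : Set X} {μ : ℂ}
  {R : X →L[ℂ] X}

theorem apply_smul_sub (hR : IsResolvent A D μ R) {d : X} (hd : d ∈ D) :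
    R (μ • d - A d) = d := by
  rw [← hR.1] at hd
  obtain ⟨w, rfl⟩ := hd
  rw [hR.2]

theorem smul_sub_apply (hR : IsResolvent A D μ R) (l : ℂ) (x : X) :
    l • R x - A (R x) = x + (l - μ) • R x := by
  linear_combination (norm := module) hR.2 x

end IsResolvent

namespace C0Semigroup.IsGenerator

open C0Semigroup

variable {X : Type*} [NormedAddCommGroup X] [NormedSpace ℂ X] {S : C0Semigroup X} {A : X → X}
  {D : Set X}

theorem mem_and_apply_eq (hgen : S.IsGenerator A D) {x v : X}
    (h : Tendsto (fun t : ℝ => t⁻¹ • (S.T t x - x)) (𝓝[>] 0) (𝓝 v)) : x ∈ D ∧ A x = v :=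
  have hx : x ∈ D := hgen.1 ▸ ⟨v, h⟩
  ⟨hx, tendsto_nhds_unique (hgen.2 x hx) h⟩

theorem map_mem (hgen : S.IsGenerator A D) {L : X →L[ℂ] X} (hL : L ∈ S.commutant) {x : X}
    (hx : x ∈ D) : L x ∈ D ∧ A (L x) = L (A x) :=
  hgen.mem_and_apply_eq <| ((L.continuous.tendsto _).comp (hgen.2 x hx)).congr' <|
    eventually_nhdsWithin_of_forall fun t ht => by
      simp only [Function.comp_apply, L.map_smul_of_tower, map_sub, ← mul_apply_eq_comp,
        (mem_commutant.1 hL t (le_of_lt ht)).eq]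

variable [CompleteSpace X]

theorem bOp_apply_mem (hgen : S.IsGenerator A D) (c : ℂ) {t : ℝ} (ht : 0 ≤ t) (x : X) :
    S.bOp c t ht x ∈ D :=
  (hgen.mem_and_apply_eq (S.tendsto_inv_smul_T_Bop_sub c ht x)).1

theorem smul_sub_apply_bOp (hgen : S.IsGenerator A D) (c : ℂ) {t : ℝ} (ht : 0 ≤ t) (x : X) :
    c • S.bOp c t ht x - A (S.bOp c t ht x) = S.cOp c t x := by
  rw [bOp_apply, (hgen.mem_and_apply_eq (S.tendsto_inv_smul_T_Bop_sub c ht x)).2,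
    sub_sub_cancel]

theorem bOp_smul_sub (hgen : S.IsGenerator A D) (c : ℂ) {t : ℝ} (ht : 0 ≤ t) {x : X}
    (hx : x ∈ D) : S.bOp c t ht (c • x - A x) = S.cOp c t x := by
  rw [map_sub, map_smul, ← (hgen.map_mem (S.bOp_mem_commutant c ht) hx).2,
    hgen.smul_sub_apply_bOp]

theorem exists_resolvent (hgen : S.IsGenerator A D) :
    ∃ μ : ℂ, ∃ R ∈ S.commutant, IsResolvent A D μ R := by
  obtain ⟨μ, hμ⟩ := S.exists_isUnit_cOp one_ne_zero
  set W : X →L[ℂ] X := ↑hμ.unit⁻¹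
  have hW : W ∈ S.commutant := mem_commutant.2 fun s hs => by
    have hC := mem_commutant.1 (S.cOp_mem_commutant μ zero_le_one) s hs
    rw [← hμ.unit_spec] at hC
    exact hC.units_inv_right
  have hCW (x : X) : S.cOp μ 1 (W x) = x := by
    rw [← mul_apply_eq_comp, ← hμ.unit_spec, Units.mul_inv]
    rfl
  refine ⟨μ, S.bOp μ 1 zero_le_one * W, mul_mem (S.bOp_mem_commutant _ _) hW, ?_, fun x => ?_⟩
  · refine subset_antisymm
      (Set.range_subset_iff.2 fun x => hgen.bOp_apply_mem μ zero_le_one _)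
      fun d hd => ⟨μ • d - A d, ?_⟩
    obtain ⟨hWd, hAW⟩ := hgen.map_mem hW hd
    rw [mul_apply_eq_comp, map_sub, map_smul, ← hAW, hgen.bOp_smul_sub μ zero_le_one hWd, hCW]
  · rw [mul_apply_eq_comp, hgen.smul_sub_apply_bOp, hCW]

variable {μ : ℂ} {R : X →L[ℂ] X}

theorem bOp_mul_one_add_smul (hgen : S.IsGenerator A D) (hR : IsResolvent A D μ R) (l : ℂ)
    {t : ℝ} (ht : 0 ≤ t) : S.bOp l t ht * (1 + (l - μ) • R) = S.cOp l t * R := by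
  ext x
  rw [mul_apply_eq_comp, mul_apply_eq_comp, add_apply, one_apply_eq_self, smul_apply,
    ← hR.smul_sub_apply, hgen.bOp_smul_sub l ht (hR.1 ▸ Set.mem_range_self x)]

theorem mul_smul_bOp_add_cOp (hgen : S.IsGenerator A D) (hR : IsResolvent A D μ R) (l : ℂ)
    {t : ℝ} (ht : 0 ≤ t) : R * ((μ - l) • S.bOp l t ht + S.cOp l t) = S.bOp l t ht := by
  ext x
  have hΓ : ((μ - l) • S.bOp l t ht + S.cOp l t) x
      = μ • S.bOp l t ht x - A (S.bOp l t ht x) := by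
    rw [add_apply, smul_apply, ← hgen.smul_sub_apply_bOp l ht]
    module
  rw [mul_apply_eq_comp, hΓ, hR.apply_smul_sub (hgen.bOp_apply_mem l ht x)]

end C0Semigroup.IsGenerator

theorem stmt14_general {X : Type*} [NormedAddCommGroup X] [NormedSpace ℂ X] [CompleteSpace X]
    (S : C0Semigroup X) (A : X → X) (D : Set X) (hgen : S.IsGenerator A D)
    (l : ℂ) (t₀ : ℝ) (ht₀ : 0 < t₀) (n : ℕ)
    (hclosed :
      IsClosed (Set.range ((Complex.exp (l * t₀) • (1 : X →L[ℂ] X) - S.T t₀) ^ n) : Set X))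
    (hker : {x : X | (fun y : X => Bop S l t₀ y)^[n] x = 0}
      ⊆ (fun x : X => l • x - A x)^[n] '' iterDomain (fun x : X => l • x - A x) D n) :
    IsClosed ((fun x : X => l • x - A x)^[n] ''
      iterDomain (fun x : X => l • x - A x) D n) := by
  obtain ⟨μ, R, hRc, hR⟩ := hgen.exists_resolvent
  have ht := ht₀.le
  set B := S.bOp l t₀ ht
  set C := S.cOp l t₀
  set K : X →L[ℂ] X := 1 + (l - μ) • R
  set Γ : X →L[ℂ] X := (μ - l) • B + C
  have hBK : B * K = C * R := hgen.bOp_mul_one_add_smul hR l ht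
  have hΓK : Γ * K = C := by
    rw [add_mul, smul_mul_assoc, hBK]
    simp only [K, mul_add, mul_one, mul_smul_comm]
    module
  have hΓ : ∀ L ∈ S.commutant, Commute L Γ := fun L hL =>
    ((C0Semigroup.commute_bOp hL l ht).smul_right _).add_right (C0Semigroup.commute_cOp hL l ht)
  have hK : K ∈ S.commutant := add_mem (one_mem _) (Subalgebra.smul_mem _ hRc _)
  have hrange : (fun x : X => l • x - A x)^[n] '' iterDomain (fun x : X => l • x - A x) D n
      = Set.range (K ^ n) := by
    rw [image_iterate_iterDomain_eq_range (R := (R : X →ₗ[ℂ] X)) hR.1 (hR.smul_sub_apply l),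
      Module.End.coe_pow, FunLike.coe_pow_eq_iterate]
    rfl
  rw [hrange] at hker ⊢
  refine isClosed_range_pow_of_factorization hΓK (hgen.mul_smul_bOp_add_cOp hR l ht) hBK
    (hΓ K hK).symm (hΓ R hRc) (C0Semigroup.commute_cOp hRc l ht).symm
    (C0Semigroup.commute_bOp hK l ht).symm hclosed fun x hx => hker ?_
  rwa [FunLike.coe_pow_eq_iterate] at hx

/-- Step of Theorem 3.1: if `R((e^{λt₀} I − T(t₀))ⁿ)` is closed and
`N(B(λ,t₀)ⁿ) ⊆ R((λ I − A)ⁿ)`, then `R((λ I − A)ⁿ)` is closed. -/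
theorem stmt14 {X : Type*} [NormedAddCommGroup X] [NormedSpace ℂ X] [CompleteSpace X]
    (S : C0Semigroup X) (A : X → X) (D : Set X) (hgen : S.IsGenerator A D)
    (l : ℂ) (t₀ : ℝ) (ht₀ : 0 < t₀) (n : ℕ) (hn : 0 < n)
    (hclosed :
      IsClosed (Set.range ((Complex.exp (l * t₀) • (1 : X →L[ℂ] X) - S.T t₀) ^ n) : Set X))
    (hker : {x : X | (fun y : X => Bop S l t₀ y)^[n] x = 0}
      ⊆ (fun x : X => l • x - A x)^[n] '' iterDomain (fun x : X => l • x - A x) D n) :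
    IsClosed ((fun x : X => l • x - A x)^[n] ''
      iterDomain (fun x : X => l • x - A x) D n) :=
  stmt14_general S A D hgen l t₀ ht₀ n hclosed hker
end

section
/- Let A, B, C, D be mutually commuting bounded linear operators on a Banach space X with C∘A + D∘B = I, and let n be a positive integer. Then dim(R(Aⁿ)/R(A^{n+1})) ≤ dim(R((A∘B)ⁿ)/R((A∘B)^{n+1})), in the sense that if the latter quotient is finite-dimensional then so is the former, with the stated inequality of dimensions. -/
/-!
Since `A` commutes with `C` and `D`, the identity `x = C A x + D B x` shows that if
`x ∈ R(Aⁿ)` and `B x ∈ R(A^{n+1})` then `x ∈ R(A^{n+1})`; iterating, the same holds with `B`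
replaced by `B^{n+1}`. As `B^{n+1}` maps `R(Aⁿ)` into `R((AB)ⁿ)` and `R(A^{n+1})` into
`R((AB)^{n+1}) ⊆ R(A^{n+1})`, it induces an injective linear map
`R(Aⁿ)/R(A^{n+1}) → R((AB)ⁿ)/R((AB)^{n+1})`.
-/

open LinearMap Module

theorem Submodule.finiteDimensional_quotient_comap_subtype_and_finrank_le
    {K V W : Type*} [DivisionRing K] [AddCommGroup V] [Module K V] [AddCommGroup W] [Module K W]
    {N N' : Submodule K V} {M M' : Submodule K W} (f : V →ₗ[K] W) (hf : ∀ x ∈ N, f x ∈ M)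
    (hf' : ∀ x ∈ N, f x ∈ M' ↔ x ∈ N') [FiniteDimensional K (M ⧸ M'.comap M.subtype)] :
    FiniteDimensional K (N ⧸ N'.comap N.subtype) ∧
      finrank K (N ⧸ N'.comap N.subtype) ≤ finrank K (M ⧸ M'.comap M.subtype) := by
  have hcomap : (M'.comap M.subtype).comap (f.restrict hf) = N'.comap N.subtype := by
    ext x
    exact hf' x x.2
  set F := (N'.comap N.subtype).mapQ (M'.comap M.subtype) (f.restrict hf) hcomap.ge
  have hF : Function.Injective F := by
    rw [← ker_eq_bot, Submodule.ker_mapQ, hcomap, Submodule.mkQ_map_self]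
  exact ⟨Module.Finite.of_injective F hF, finrank_le_finrank_of_injective hF⟩

namespace Module.End

variable {R M : Type*} [Semiring R] [AddCommMonoid M] [Module R M] {A B C D : Module.End R M}

theorem range_mul_pow_le_range_pow_left (hAB : Commute A B) (k : ℕ) :
    range ((A * B) ^ k) ≤ range (A ^ k) := by
  rw [hAB.mul_pow]
  exact range_comp_le_range _ _

theorem pow_succ_apply_mem_range_mul_pow (hAB : Commute A B) {k : ℕ} {x : M}
    (hx : x ∈ range (A ^ k)) : (B ^ (k + 1)) x ∈ range ((A * B) ^ k) := by
  obtain ⟨u, rfl⟩ := hx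
  refine ⟨B u, ?_⟩
  rw [← Module.End.mul_apply, ← Module.End.mul_apply, hAB.mul_pow, mul_assoc, ← pow_succ,
    (hAB.pow_pow k (k + 1)).eq]

theorem pow_apply_mem_range_mul_pow (hAB : Commute A B) (k : ℕ) (u : M) :
    (B ^ k) ((A ^ k) u) ∈ range ((A * B) ^ k) :=
  ⟨u, by rw [← Module.End.mul_apply, hAB.mul_pow, (hAB.pow_pow k k).eq]⟩

theorem apply_mem_range_pow (hAB : Commute A B) {k : ℕ} {x : M} (hx : x ∈ range (A ^ k)) :
    B x ∈ range (A ^ k) := by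
  obtain ⟨u, rfl⟩ := hx
  exact ⟨B u, by rw [← Module.End.mul_apply, ← Module.End.mul_apply, (hAB.pow_left k).eq]⟩

theorem mem_range_pow_succ_of_apply_mem (hAC : Commute A C) (hAD : Commute A D)
    (h : C * A + D * B = 1) {n : ℕ} {x : M} (hx : x ∈ range (A ^ n))
    (hBx : B x ∈ range (A ^ (n + 1))) : x ∈ range (A ^ (n + 1)) := by
  obtain ⟨u, rfl⟩ := hx
  obtain ⟨v, hv⟩ := hBx
  refine ⟨C u + D v, ?_⟩
  calc (A ^ (n + 1)) (C u + D v) = C ((A ^ (n + 1)) u) + D ((A ^ (n + 1)) v) := by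
        rw [map_add, ← Module.End.mul_apply, ← Module.End.mul_apply,
          (hAC.pow_left _).eq, (hAD.pow_left _).eq, Module.End.mul_apply, Module.End.mul_apply]
    _ = (C * A + D * B) ((A ^ n) u) := by rw [hv, pow_succ']; rfl
    _ = (A ^ n) u := by rw [h, Module.End.one_apply]

theorem mem_range_pow_succ_of_pow_apply_mem (hAB : Commute A B) (hAC : Commute A C)
    (hAD : Commute A D) (h : C * A + D * B = 1) {n : ℕ} (k : ℕ) {x : M}
    (hx : x ∈ range (A ^ n)) (hBx : (B ^ k) x ∈ range (A ^ (n + 1))) :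
    x ∈ range (A ^ (n + 1)) := by
  induction k generalizing x with
  | zero => simpa using hBx
  | succ k ih =>
    rw [pow_succ B, Module.End.mul_apply] at hBx
    exact mem_range_pow_succ_of_apply_mem hAC hAD h hx (ih (apply_mem_range_pow hAB hx) hBx)

theorem finiteDimensional_quotient_range_pow_and_finrank_le {K V : Type*} [DivisionRing K]
    [AddCommGroup V] [Module K V] {A B C D : Module.End K V} (hAB : Commute A B)
    (hAC : Commute A C) (hAD : Commute A D) (h : C * A + D * B = 1) (n : ℕ)
    [FiniteDimensional K (range ((A * B) ^ n) ⧸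
      (range ((A * B) ^ (n + 1))).comap (range ((A * B) ^ n)).subtype)] :
    FiniteDimensional K (range (A ^ n) ⧸ (range (A ^ (n + 1))).comap (range (A ^ n)).subtype) ∧
      finrank K (range (A ^ n) ⧸ (range (A ^ (n + 1))).comap (range (A ^ n)).subtype) ≤
        finrank K (range ((A * B) ^ n) ⧸
          (range ((A * B) ^ (n + 1))).comap (range ((A * B) ^ n)).subtype) := by
  refine Submodule.finiteDimensional_quotient_comap_subtype_and_finrank_le (B ^ (n + 1))
    (fun x hx => pow_succ_apply_mem_range_mul_pow hAB hx) fun x hx => ⟨fun hBx => ?_, ?_⟩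
  · exact mem_range_pow_succ_of_pow_apply_mem hAB hAC hAD h (n + 1) hx
      (range_mul_pow_le_range_pow_left hAB _ hBx)
  · rintro ⟨u, rfl⟩
    exact pow_apply_mem_range_mul_pow hAB _ u

end Module.End

theorem stmt19_general {X : Type*} [NormedAddCommGroup X] [NormedSpace ℂ X]
    (A B C D : X →L[ℂ] X)
    (hAB : Commute A B) (hAC : Commute A C) (hAD : Commute A D)
    (h : C * A + D * B = 1) (n : ℕ)
    [FiniteDimensional ℂ
      (↥(LinearMap.range ((A * B) ^ n : X →ₗ[ℂ] X)) ⧸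
        (LinearMap.range ((A * B) ^ (n + 1) : X →ₗ[ℂ] X)).comap (LinearMap.range ((A * B) ^ n : X →ₗ[ℂ] X)).subtype)] :
    FiniteDimensional ℂ
      (↥(LinearMap.range (A ^ n : X →ₗ[ℂ] X)) ⧸
        (LinearMap.range (A ^ (n + 1) : X →ₗ[ℂ] X)).comap (LinearMap.range (A ^ n : X →ₗ[ℂ] X)).subtype) ∧
    Module.finrank ℂ
      (↥(LinearMap.range (A ^ n : X →ₗ[ℂ] X)) ⧸
        (LinearMap.range (A ^ (n + 1) : X →ₗ[ℂ] X)).comap (LinearMap.range (A ^ n : X →ₗ[ℂ] X)).subtype) ≤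
    Module.finrank ℂ
      (↥(LinearMap.range ((A * B) ^ n : X →ₗ[ℂ] X)) ⧸
        (LinearMap.range ((A * B) ^ (n + 1) : X →ₗ[ℂ] X)).comap (LinearMap.range ((A * B) ^ n : X →ₗ[ℂ] X)).subtype) := by
  have hcomm {S T : X →L[ℂ] X} (hST : Commute S T) : Commute (S : X →ₗ[ℂ] X) T :=
    hST.map ContinuousLinearMap.toLinearMapRingHom
  have h' : (C : X →ₗ[ℂ] X) * A + (D : X →ₗ[ℂ] X) * B = 1 := by
    simpa using congrArg ContinuousLinearMap.toLinearMapRingHom h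
  exact Module.End.finiteDimensional_quotient_range_pow_and_finrank_le (hcomm hAB) (hcomm hAC)
    (hcomm hAD) h' n

/-- Algebraic ingredient of Theorem 3.1: if `A, B, C, D` are mutually commuting bounded
operators with `C ∘ A + D ∘ B = I` and `n ≥ 1`, then
`dim (R(Aⁿ)/R(A^{n+1})) ≤ dim (R((A∘B)ⁿ)/R((A∘B)^{n+1}))`: if the latter quotient is
finite dimensional then so is the former, with the corresponding inequality of dimensions. -/
theorem stmt19 {X : Type*} [NormedAddCommGroup X] [NormedSpace ℂ X] [CompleteSpace X]
    (A B C D : X →L[ℂ] X)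
    (hAB : Commute A B) (hAC : Commute A C) (hAD : Commute A D)
    (hBC : Commute B C) (hBD : Commute B D) (hCD : Commute C D)
    (h : C * A + D * B = 1) (n : ℕ) (hn : 0 < n)
    [FiniteDimensional ℂ
      (↥(LinearMap.range ((A * B) ^ n : X →ₗ[ℂ] X)) ⧸
        (LinearMap.range ((A * B) ^ (n + 1) : X →ₗ[ℂ] X)).comap (LinearMap.range ((A * B) ^ n : X →ₗ[ℂ] X)).subtype)] :
    FiniteDimensional ℂ
      (↥(LinearMap.range (A ^ n : X →ₗ[ℂ] X)) ⧸
        (LinearMap.range (A ^ (n + 1) : X →ₗ[ℂ] X)).comap (LinearMap.range (A ^ n : X →ₗ[ℂ] X)).subtype) ∧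
    Module.finrank ℂ
      (↥(LinearMap.range (A ^ n : X →ₗ[ℂ] X)) ⧸
        (LinearMap.range (A ^ (n + 1) : X →ₗ[ℂ] X)).comap (LinearMap.range (A ^ n : X →ₗ[ℂ] X)).subtype) ≤
    Module.finrank ℂ
      (↥(LinearMap.range ((A * B) ^ n : X →ₗ[ℂ] X)) ⧸
        (LinearMap.range ((A * B) ^ (n + 1) : X →ₗ[ℂ] X)).comap (LinearMap.range ((A * B) ^ n : X →ₗ[ℂ] X)).subtype) :=
  stmt19_general A B C D hAB hAC hAD h n
end
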